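/- Abstraction step soundness for the innermost strategy: let t ∈ T(F,X), let p_1,…,p_k be pairwise parallel (mutually incomparable, non-root) positions of t, and let α be a ground substitution with Var(t) ⊆ Dom(α) such that each α(t|_{p_i}) innermost terminates. Then for every choice of innermost normal forms n_i of α(t|_{p_i}) (i = 1,…,k), there is a sequence of innermost rewrite steps αt →^inn* (αt)[n_1]_{p_1}…[n_k]_{p_k}. -/
import Mathlib


namespace TRS

inductive Term (F V : Type*) where
  | var : V → Term F V
  | app : F → List (Term F V) → Term F V

namespace Term

variable {F V : Type*}

mutual
  def subst (σ : V → Term F V) : Term F V → Term F V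
    | .var x => σ x
    | .app f ts => .app f (substList σ ts)

  def substList (σ : V → Term F V) : List (Term F V) → List (Term F V)
    | [] => []
    | t :: ts => subst σ t :: substList σ ts
end

mutual
  def vars : Term F V → Set V
    | .var x => {x}
    | .app _ ts => varsList ts

  def varsList : List (Term F V) → Set V
    | [] => ∅
    | t :: ts => vars t ∪ varsList ts
end

def IsGround (t : Term F V) : Prop := vars t = ∅

def top : Term F V → Option F
  | .var _ => none
  | .app f _ => some f

def subtermAt : List ℕ → Term F V → Option (Term F V)
  | [], t => some t
  | _ :: _, .var _ => none
  | i :: p, .app _ ts =>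
    match ts[i]? with
    | none => none
    | some u => subtermAt p u

def replaceAt : List ℕ → Term F V → Term F V → Option (Term F V)
  | [], _, u => some u
  | _ :: _, .var _, _ => none
  | i :: p, .app f ts, u =>
    match ts[i]? with
    | none => none
    | some ti =>
      match replaceAt p ti u with
      | none => none
      | some ti' => some (.app f (ts.set i ti'))

inductive WF (arity : F → ℕ) : Term F V → Prop
  | var (x : V) : WF arity (.var x)
  | app (f : F) (ts : List (Term F V)) :
      ts.length = arity f → (∀ t ∈ ts, WF arity t) → WF arity (.app f ts)

inductive Occurs (f : F) : Term F V → Prop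
  | head (ts : List (Term F V)) : Occurs f (.app f ts)
  | arg {g : F} {ts : List (Term F V)} {t : Term F V} :
      t ∈ ts → Occurs f t → Occurs f (.app g ts)

end Term

open Term

structure Rule (F V : Type*) where
  lhs : Term F V
  rhs : Term F V

variable {F V : Type*}

/-- The domain of a substitution. -/
def SDom (σ : V → Term F V) : Set V := {x | σ x ≠ Term.var x}

/-- The range (variables) of a substitution. -/
def SRan (σ : V → Term F V) : Set V := ⋃ x ∈ SDom σ, vars (σ x)

/-- A ground substitution maps every variable of its domain to a ground term. -/
def GroundSubst (σ : V → Term F V) : Prop := ∀ x ∈ SDom σ, IsGround (σ x)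

/-- `R` is a rewrite system: no left-hand side is a variable, and
`Var(rhs) ⊆ Var(lhs)` for every rule. -/
def IsRS (R : List (Rule F V)) : Prop :=
  ∀ ρ ∈ R, (∀ x : V, ρ.lhs ≠ Term.var x) ∧ vars ρ.rhs ⊆ vars ρ.lhs

/-- Rewriting at position `p` with the rule `l → r`. -/
def RewriteAtWith (l r : Term F V) (p : List ℕ) (s t : Term F V) : Prop :=
  ∃ τ : V → Term F V, subtermAt p s = some (subst τ l) ∧ replaceAt p s (subst τ r) = some t

/-- Rewriting at position `p` with some rule of `R`. -/
def RewriteAt (R : List (Rule F V)) (p : List ℕ) (s t : Term F V) : Prop :=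
  ∃ ρ ∈ R, RewriteAtWith ρ.lhs ρ.rhs p s t

/-- The rewriting relation induced by `R`. -/
def Rewrite (R : List (Rule F V)) (s t : Term F V) : Prop :=
  ∃ p, RewriteAt R p s t

def ReducibleAt (R : List (Rule F V)) (s : Term F V) (p : List ℕ) : Prop :=
  ∃ t, RewriteAt R p s t

def Reducible (R : List (Rule F V)) (s : Term F V) : Prop :=
  ∃ t, Rewrite R s t

def NormalForm (R : List (Rule F V)) (s : Term F V) : Prop := ¬ Reducible R s

/-- `n` is a normal form of `s`. -/
def IsNormalFormOf (R : List (Rule F V)) (s n : Term F V) : Prop :=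
  Relation.ReflTransGen (Rewrite R) s n ∧ NormalForm R n

/-- `q` is strictly below `p` (`p` is a strict prefix of `q`). -/
def StrictBelow (p q : List ℕ) : Prop := p <+: q ∧ p ≠ q

/-- Innermost rewrite step at position `p`. -/
def InnAt (R : List (Rule F V)) (p : List ℕ) (s t : Term F V) : Prop :=
  RewriteAt R p s t ∧ ∀ q, StrictBelow p q → ¬ ReducibleAt R s q

def InnStep (R : List (Rule F V)) (s t : Term F V) : Prop := ∃ p, InnAt R p s t

/-- Outermost rewrite step at position `p`. -/
def OutAt (R : List (Rule F V)) (p : List ℕ) (s t : Term F V) : Prop :=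
  RewriteAt R p s t ∧ ∀ q, StrictBelow q p → ¬ ReducibleAt R s q

def OutStep (R : List (Rule F V)) (s t : Term F V) : Prop := ∃ p, OutAt R p s t

/-- Innermost rewrite step at position `p` with rule `l → r`. -/
def InnAtWith (R : List (Rule F V)) (l r : Term F V) (p : List ℕ) (s t : Term F V) : Prop :=
  RewriteAtWith l r p s t ∧ ∀ q, StrictBelow p q → ¬ ReducibleAt R s q

/-- Outermost rewrite step at position `p` with rule `l → r`. -/
def OutAtWith (R : List (Rule F V)) (l r : Term F V) (p : List ℕ) (s t : Term F V) : Prop :=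
  RewriteAtWith l r p s t ∧ ∀ q, StrictBelow q p → ¬ ReducibleAt R s q

/-- No infinite innermost derivation starts from `t`. -/
def InnTerminates (R : List (Rule F V)) (t : Term F V) : Prop :=
  ¬ ∃ f : ℕ → Term F V, f 0 = t ∧ ∀ n, InnStep R (f n) (f (n + 1))

/-- No infinite outermost derivation starts from `t`. -/
def OutTerminates (R : List (Rule F V)) (t : Term F V) : Prop :=
  ¬ ∃ f : ℕ → Term F V, f 0 = t ∧ ∀ n, OutStep R (f n) (f (n + 1))

def Unifies (σ : V → Term F V) (u v : Term F V) : Prop := subst σ u = subst σ v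

/-- `σ` is a most general unifier of `u` and `v`. -/
def IsMGU (u v : Term F V) (σ : V → Term F V) : Prop :=
  Unifies σ u v ∧
    ∀ τ : V → Term F V, Unifies τ u v → ∃ ρ : V → Term F V, ∀ x, subst ρ (σ x) = τ x

/-- The usable rules of a term (least set closed under the defining equations). -/
inductive Usable (R : List (Rule F V)) (XA : Set V) : Term F V → Rule F V → Prop
  | var {x : V} {ρ : Rule F V} : x ∉ XA → ρ ∈ R → Usable R XA (Term.var x) ρ
  | rls {f : F} {ts : List (Term F V)} {ρ : Rule F V} :
      ρ ∈ R → Term.top ρ.lhs = some f → Usable R XA (Term.app f ts) ρ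
  | arg {f : F} {ts : List (Term F V)} {t : Term F V} {ρ : Rule F V} :
      t ∈ ts → Usable R XA t ρ → Usable R XA (Term.app f ts) ρ
  | rhs {f : F} {ts : List (Term F V)} {ρ' ρ : Rule F V} :
      ρ' ∈ R → Term.top ρ'.lhs = some f → Usable R XA ρ'.rhs ρ → Usable R XA (Term.app f ts) ρ

section AuxLemmas

theorem substList_eq_map (σ : V → Term F V) (ts : List (Term F V)) :
    substList σ ts = ts.map (subst σ) := by
  induction ts with
  | nil => rfl
  | cons t ts ih => simp [substList, subst, ih]

theorem subtermAt_subst (σ : V → Term F V) :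
    ∀ (p : List ℕ) (t u : Term F V), subtermAt p t = some u →
      subtermAt p (subst σ t) = some (subst σ u)
  | [], t, u, h => by
    simp only [subtermAt, Option.some.injEq] at h ⊢; rw [h]
  | i :: p, .var x, u, h => by simp [subtermAt] at h
  | i :: p, .app f ts, u, h => by
    cases hts : ts[i]? with
    | none => simp [subtermAt, hts] at h
    | some ti =>
      simp only [subtermAt, hts] at h
      simp only [subst, subtermAt, substList_eq_map, List.getElem?_map, hts,
        Option.map_some]
      exact subtermAt_subst σ p ti u h

theorem replaceAt_isSome_of (v : Term F V) :
    ∀ (p : List ℕ) (t s : Term F V), subtermAt p t = some s →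
      ∃ t', replaceAt p t v = some t'
  | [], t, s, _ => ⟨v, rfl⟩
  | i :: p, .var x, s, h => by simp [subtermAt] at h
  | i :: p, .app f ts, s, h => by
    cases hts : ts[i]? with
    | none => simp [subtermAt, hts] at h
    | some ti =>
      simp only [subtermAt, hts] at h
      obtain ⟨ti', hti'⟩ := replaceAt_isSome_of v p ti s h
      exact ⟨.app f (ts.set i ti'), by simp only [replaceAt, hts, hti']⟩

theorem subtermAt_replaceAt :
    ∀ (p : List ℕ) (t v t' : Term F V), replaceAt p t v = some t' →
      subtermAt p t' = some v
  | [], t, v, t', h => by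
    simp only [replaceAt, Option.some.injEq] at h; rw [← h]; rfl
  | i :: p, .var x, v, t', h => by simp [replaceAt] at h
  | i :: p, .app f ts, v, t', h => by
    cases hts : ts[i]? with
    | none => simp [replaceAt, hts] at h
    | some ti =>
      cases hti' : replaceAt p ti v with
      | none => simp [replaceAt, hts, hti'] at h
      | some ti' =>
        simp only [replaceAt, hts, hti', Option.some.injEq] at h
        subst h
        have hi : i < ts.length := (List.getElem?_eq_some_iff.mp hts).1
        simp only [subtermAt, List.getElem?_set_self hi]
        exact subtermAt_replaceAt p ti v ti' hti'

theorem replaceAt_self :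
    ∀ (p : List ℕ) (t s : Term F V), subtermAt p t = some s → replaceAt p t s = some t
  | [], t, s, h => by
    simp only [subtermAt, Option.some.injEq] at h; rw [h]; rfl
  | i :: p, .var x, s, h => by simp [subtermAt] at h
  | i :: p, .app f ts, s, h => by
    cases hts : ts[i]? with
    | none => simp [subtermAt, hts] at h
    | some ti =>
      simp only [subtermAt, hts] at h
      simp only [replaceAt, hts, replaceAt_self p ti s h]
      have hset : ts.set i ti = ts := by
        apply List.ext_getElem?
        intro j
        rcases eq_or_ne i j with rfl | hij
        · rw [List.getElem?_set_self (List.getElem?_eq_some_iff.mp hts).1]; exact hts.symm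
        · exact List.getElem?_set_ne hij
      rw [hset]

theorem replaceAt_replaceAt :
    ∀ (p : List ℕ) (t u t1 v : Term F V), replaceAt p t u = some t1 →
      replaceAt p t1 v = replaceAt p t v
  | [], t, u, t1, v, h => rfl
  | i :: p, .var x, u, t1, v, h => by simp [replaceAt] at h
  | i :: p, .app f ts, u, t1, v, h => by
    cases hts : ts[i]? with
    | none => simp [replaceAt, hts] at h
    | some ti =>
      cases hti' : replaceAt p ti u with
      | none => simp [replaceAt, hts, hti'] at h
      | some ti' =>
        simp only [replaceAt, hts, hti', Option.some.injEq] at h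
        subst h
        have hi : i < ts.length := (List.getElem?_eq_some_iff.mp hts).1
        simp only [replaceAt, hts, List.getElem?_set_self hi,
          replaceAt_replaceAt p ti u ti' v hti']
        cases replaceAt p ti v with
        | none => rfl
        | some ti'' => simp [List.set_set]

theorem subtermAt_replaceAt_of_ne :
    ∀ (p q : List ℕ) (t v t' : Term F V), replaceAt p t v = some t' →
      ¬ (p <+: q) → ¬ (q <+: p) → subtermAt q t' = subtermAt q t
  | [], q, t, v, t', _, hpq, _ => absurd (List.nil_prefix) hpq
  | i :: p, [], t, v, t', _, _, hqp => absurd (List.nil_prefix) hqp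
  | i :: p, j :: q, .var x, v, t', h, _, _ => by simp [replaceAt] at h
  | i :: p, j :: q, .app f ts, v, t', h, hpq, hqp => by
    cases hts : ts[i]? with
    | none => simp [replaceAt, hts] at h
    | some ti =>
      cases hti' : replaceAt p ti v with
      | none => simp [replaceAt, hts, hti'] at h
      | some ti' =>
        simp only [replaceAt, hts, hti', Option.some.injEq] at h
        subst h
        rcases eq_or_ne i j with rfl | hij
        · have hpq' : ¬ (p <+: q) := fun hp => hpq (List.cons_prefix_cons.mpr ⟨rfl, hp⟩)
          have hqp' : ¬ (q <+: p) := fun hp => hqp (List.cons_prefix_cons.mpr ⟨rfl, hp⟩)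
          have hi : i < ts.length := (List.getElem?_eq_some_iff.mp hts).1
          simp only [subtermAt, List.getElem?_set_self hi, hts]
          exact subtermAt_replaceAt_of_ne p q ti v ti' hti' hpq' hqp'
        · simp only [subtermAt, List.getElem?_set_ne hij]

theorem subtermAt_append :
    ∀ (p q : List ℕ) (t s : Term F V), subtermAt p t = some s →
      subtermAt (p ++ q) t = subtermAt q s
  | [], q, t, s, h => by
    simp only [subtermAt, Option.some.injEq] at h; rw [h]; rfl
  | i :: p, q, .var x, s, h => by simp [subtermAt] at h
  | i :: p, q, .app f ts, s, h => by
    cases hts : ts[i]? with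
    | none => simp [subtermAt, hts] at h
    | some ti =>
      simp only [subtermAt, hts] at h
      simp only [List.cons_append, subtermAt, hts]
      exact subtermAt_append p q ti s h

theorem replaceAt_append :
    ∀ (p q : List ℕ) (t s v s' : Term F V), subtermAt p t = some s →
      replaceAt q s v = some s' → replaceAt (p ++ q) t v = replaceAt p t s'
  | [], q, t, s, v, s', h, hr => by
    simp only [subtermAt, Option.some.injEq] at h
    subst h
    simp only [List.nil_append, hr]; rfl
  | i :: p, q, .var x, s, v, s', h, hr => by simp [subtermAt] at h
  | i :: p, q, .app f ts, s, v, s', h, hr => by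
    cases hts : ts[i]? with
    | none => simp [subtermAt, hts] at h
    | some ti =>
      simp only [subtermAt, hts] at h
      simp only [List.cons_append, replaceAt, hts, List.append_eq,
        replaceAt_append p q ti s v s' h hr]

theorem reducibleAt_of_subterm {R : List (Rule F V)} {p q : List ℕ} {T s : Term F V}
    (hT : subtermAt p T = some s) (h : ReducibleAt R T (p ++ q)) :
    ReducibleAt R s q := by
  obtain ⟨x, ρ, hρ, τ, hsub, hrep⟩ := h
  rw [subtermAt_append p q T s hT] at hsub
  obtain ⟨s', hs'⟩ := replaceAt_isSome_of (subst τ ρ.rhs) q s _ hsub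
  exact ⟨s', ρ, hρ, τ, hsub, hs'⟩

theorem innAt_lift {R : List (Rule F V)} {q : List ℕ} {s s1 : Term F V}
    (h : InnAt R q s s1) (p : List ℕ) (T : Term F V) (hT : subtermAt p T = some s) :
    ∃ T1, replaceAt p T s1 = some T1 ∧ InnAt R (p ++ q) T T1 := by
  obtain ⟨⟨ρ, hρ, τ, hsub, hrep⟩, hinn⟩ := h
  obtain ⟨T1, hT1⟩ := replaceAt_isSome_of s1 p T s hT
  refine ⟨T1, hT1, ⟨⟨ρ, hρ, τ, ?_, ?_⟩, ?_⟩⟩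
  · rw [subtermAt_append p q T s hT]; exact hsub
  · rw [replaceAt_append p q T s _ s1 hT hrep]; exact hT1
  · rintro r ⟨⟨e, rfl⟩, hne⟩ hred
    have he : e ≠ [] := by rintro rfl; simp at hne
    rw [List.append_assoc] at hred
    have hred' : ReducibleAt R s (q ++ e) := reducibleAt_of_subterm hT hred
    exact hinn (q ++ e) ⟨⟨e, rfl⟩, by simpa using he⟩ hred'

theorem innSteps_lift {R : List (Rule F V)} {s s' : Term F V}
    (h : Relation.ReflTransGen (InnStep R) s s') :
    ∀ (p : List ℕ) (T : Term F V), subtermAt p T = some s →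
      ∃ T', replaceAt p T s' = some T' ∧ Relation.ReflTransGen (InnStep R) T T' := by
  induction h using Relation.ReflTransGen.head_induction_on with
  | refl => intro p T hT; exact ⟨T, replaceAt_self p T s' hT, .refl⟩
  | head hstep _ ih =>
    intro p T hT
    obtain ⟨q, hq⟩ := hstep
    obtain ⟨T1, hT1, hinn⟩ := innAt_lift hq p T hT
    obtain ⟨T', hT', hsteps⟩ := ih p T1 (subtermAt_replaceAt p T _ T1 hT1)
    refine ⟨T', ?_, Relation.ReflTransGen.head ⟨p ++ q, hinn⟩ hsteps⟩
    rw [← replaceAt_replaceAt p T _ T1 s' hT1]; exact hT'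

theorem abstraction_aux {R : List (Rule F V)} {k : ℕ} (p : Fin k → List ℕ)
    (v nfv : Fin k → Term F V)
    (hnf : ∀ i, Relation.ReflTransGen (InnStep R) (v i) (nfv i)) :
    ∀ (L : List (Fin k)) (T : Term F V),
      (∀ i ∈ L, subtermAt (p i) T = some (v i)) →
      L.Pairwise (fun i j => ¬ (p i <+: p j) ∧ ¬ (p j <+: p i)) →
      ∃ final, L.foldlM (fun acc i => replaceAt (p i) acc (nfv i)) T = some final ∧
        Relation.ReflTransGen (InnStep R) T final
  | [], T, _, _ => ⟨T, rfl, .refl⟩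
  | i :: L, T, hsub, hpw => by
    obtain ⟨T1, hT1, hsteps⟩ := innSteps_lift (hnf i) (p i) T (hsub i (by simp))
    obtain ⟨hparl, hpw'⟩ := List.pairwise_cons.mp hpw
    obtain ⟨final, hfold, hsteps'⟩ := abstraction_aux p v nfv hnf L T1 (fun j hj => by
      rw [subtermAt_replaceAt_of_ne (p i) (p j) T (nfv i) T1 hT1 (hparl j hj).1
        (hparl j hj).2]
      exact hsub j (by simp [hj])) hpw'
    refine ⟨final, ?_, hsteps.trans hsteps'⟩
    simp only [List.foldlM_cons, hT1, Option.bind_some]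
    exact hfold

end AuxLemmas

/-- abstraction step soundness for the innermost strategy:
if `p₁,…,p_k` are pairwise parallel non-root positions of `t` and each `α(t|_{p_i})`
innermost terminates, then for every choice of innermost normal forms `n_i` of the
`α(t|_{p_i})` there is an innermost derivation `αt →inn* (αt)[n₁]_{p₁}…[n_k]_{p_k}`. -/
theorem abstraction_step_sound {F V : Type*}
    (R : List (Rule F V)) (hRS : IsRS R)
    (t : Term F V) (k : ℕ) (p : Fin k → List ℕ)
    -- non-root positions
    (hroot : ∀ i, p i ≠ [])
    -- pairwise parallel (mutually incomparable) positions
    (hpar : ∀ i j, i ≠ j → ¬ (p i <+: p j))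
    -- positions of `t`, with subterms `u i`
    (u : Fin k → Term F V) (hu : ∀ i, subtermAt (p i) t = some (u i))
    (α : V → Term F V)
    -- `α` is ground on the variables of `t` (`Var(t) ⊆ Dom(α)`)
    (hg : ∀ x ∈ vars t, IsGround (α x))
    -- each `α(t|_{p_i})` innermost terminates
    (hterm : ∀ i, InnTerminates R (subst α (u i)))
    -- a choice of innermost normal forms `nf i` of the `α(t|_{p_i})`
    (nf : Fin k → Term F V)
    (hnf : ∀ i, Relation.ReflTransGen (InnStep R) (subst α (u i)) (nf i) ∧
        NormalForm R (nf i)) :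
    ∃ final : Term F V,
      (List.finRange k).foldlM (fun acc i => replaceAt (p i) acc (nf i)) (subst α t) =
          some final ∧
      Relation.ReflTransGen (InnStep R) (subst α t) final := by
  have hpw : (List.finRange k).Pairwise
      (fun i j => ¬ (p i <+: p j) ∧ ¬ (p j <+: p i)) :=
    (List.nodup_finRange k).imp
      (fun {i j} (h : i ≠ j) => ⟨hpar i j h, hpar j i h.symm⟩)
  exact abstraction_aux p (fun i => subst α (u i)) nf (fun i => (hnf i).1)
    (List.finRange k) (subst α t)
    (fun i _ => subtermAt_subst α (p i) t (u i) (hu i)) hpw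

end TRS
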